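/- Let Q be a finite-dimensional commutative k-algebra with k-vector space bases {a_i}_{i=1}^m and {b_i}_{i=1}^m, define Θ: Hom_k(Q,k) → Q by Θ(φ) = Σ_{i=1}^m φ(a_i)·b_i, equip Hom_k(Q,k) with the Q-module structure (a·φ)(x) = φ(ax), and assume Θ is a homomorphism of Q-modules. Then there exists a unique k-linear form λ: Q → k such that λ(a_i b_j) = δ_ij for all i,j; moreover this λ is dualizing, i.e. the bilinear form Φ_λ(a,b) = λ(ab) is non-degenerate. -/

import Mathlib

/-!
`Θ` is a linear isomorphism `Hom_k(Q,k) ≃ Q` (it sends the coordinate form `a_i^*` to `b_i`), and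
for any form `λ` the `j`-th `b`-coordinate of `Θ(λ(c · -))` is `λ(c a_j)`. Take `λ := Θ⁻¹(1)`:
`Q`-linearity gives `Θ(λ(b_j · -)) = b_j`, so `λ(b_j a_i) = δ_ij`. Conversely such a `λ`
satisfies `λ(a_i x) = x_i` (the `b`-coordinates of `x`), hence `Θ(λ) = 1`, which forces
uniqueness; and if `λ(x ·) = 0` then `x = x Θ(λ) = Θ(λ(x · -)) = 0`.
-/

namespace Module.Basis

variable {ι k Q : Type*} [Fintype ι] [CommSemiring k] [CommSemiring Q] [Algebra k Q]
  (a b : Basis ι k Q)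

/-- The map `Θ` of the paper. -/
noncomputable def theta (φ : Q →ₗ[k] k) : Q := ∑ i, φ (a i) • b i

def IsDualPair [DecidableEq ι] (lam : Q →ₗ[k] k) : Prop :=
  ∀ i j, lam (a i * b j) = if i = j then 1 else 0

variable {a b}

@[simp]
lemma repr_theta (φ : Q →ₗ[k] k) (i : ι) : b.repr (theta a b φ) i = φ (a i) := by
  rw [theta, b.repr_sum_self]

variable (a b)

lemma theta_injective : Function.Injective (theta a b) := fun φ ψ h =>
  a.ext fun i => by rw [← repr_theta (b := b), h, repr_theta]

lemma theta_surjective : Function.Surjective (theta a b) := fun x =>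
  ⟨a.constr k (b.repr x), by simp only [theta, constr_basis, b.sum_repr]⟩

variable {a b}

section IsDualPair

variable [DecidableEq ι]

lemma IsDualPair.apply_mul_eq_repr {lam : Q →ₗ[k] k} (h : IsDualPair a b lam) (i : ι) (x : Q) :
    lam (a i * x) = b.repr x i := by
  calc lam (a i * x) = lam (a i * ∑ j, b.repr x j • b j) := by rw [b.sum_repr]
    _ = b.repr x i := by
      simp only [Finset.mul_sum, mul_smul_comm, map_sum, map_smul, h i, smul_eq_mul, mul_ite,
        mul_one, mul_zero, Finset.sum_ite_eq, Finset.mem_univ, if_true]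

lemma IsDualPair.theta_eq_one {lam : Q →ₗ[k] k} (h : IsDualPair a b lam) : theta a b lam = 1 :=
  b.ext_elem fun i => by rw [repr_theta, ← mul_one (a i), h.apply_mul_eq_repr]

end IsDualPair

section QLinear

variable (hΘ : ∀ (c : Q) (φ : Q →ₗ[k] k), theta a b (φ ∘ₗ LinearMap.mulLeft k c) = c * theta a b φ)
include hΘ

lemma eq_zero_of_forall_apply_mul_eq_zero {lam : Q →ₗ[k] k} (h : theta a b lam = 1) {x : Q}
    (hx : ∀ y, lam (x * y) = 0) : x = 0 := by
  have hzero : lam ∘ₗ LinearMap.mulLeft k x = 0 := LinearMap.ext hx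
  have hx' := hΘ x lam
  rw [h, mul_one, hzero] at hx'
  simpa only [theta, LinearMap.zero_apply, zero_smul, Finset.sum_const_zero] using hx'.symm

lemma isDualPair_of_theta_eq_one [DecidableEq ι] {lam : Q →ₗ[k] k} (h : theta a b lam = 1) :
    IsDualPair a b lam := fun i j => by
  have hj := congrArg (fun x => b.repr x i) (hΘ (b j) lam)
  simp only [h, mul_one, repr_theta, repr_self, LinearMap.comp_apply,
    LinearMap.mulLeft_apply] at hj
  rw [mul_comm, hj, Finsupp.single_apply]
  simp only [eq_comm]

end QLinear

end Module.Basis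

open Module.Basis in
/-- Let `Q` be a finite-dimensional commutative `k`-algebra with bases
`{a_i}`, `{b_i}` and let `Θ : Hom_k(Q,k) → Q`, `Θ(φ) = Σ_i φ(a_i)·b_i`.  Assume `Θ` is a
homomorphism of `Q`-modules for the `Q`-module structure `(c·φ)(x) = φ(cx)` on the dual.
Then there is a unique `k`-linear form `λ : Q → k` with `λ(a_i b_j) = δ_ij` for all `i, j`;
moreover any such `λ` is dualizing: the bilinear form `Φ_λ(a,b) = λ(ab)` is
non-degenerate. -/
theorem stmt8 {k Q : Type*} [Field k] [CommRing Q] [Algebra k Q] {m : ℕ}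
    (a b : Module.Basis (Fin m) k Q)
    (hTheta : ∀ (c : Q) (phi : Q →ₗ[k] k),
      (∑ i, phi (c * a i) • b i) = c * ∑ i, phi (a i) • b i) :
    (∃! lam : Q →ₗ[k] k, ∀ i j, lam (a i * b j) = if i = j then 1 else 0) ∧
      (∀ lam : Q →ₗ[k] k, (∀ i j, lam (a i * b j) = if i = j then 1 else 0) →
        ∀ x : Q, (∀ y : Q, lam (x * y) = 0) → x = 0) := by
  have hΘ : ∀ (c : Q) (φ : Q →ₗ[k] k),
      theta a b (φ ∘ₗ LinearMap.mulLeft k c) = c * theta a b φ := hTheta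
  obtain ⟨lam₀, hlam₀⟩ := theta_surjective a b 1
  refine ⟨⟨lam₀, isDualPair_of_theta_eq_one hΘ hlam₀, fun lam hlam => ?_⟩, ?_⟩
  · exact theta_injective a b ((IsDualPair.theta_eq_one hlam).trans hlam₀.symm)
  · exact fun lam hlam x => eq_zero_of_forall_apply_mul_eq_zero hΘ (IsDualPair.theta_eq_one hlam)
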